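/- arXiv:1103.1750 — 3 statements merged into one kernel-verified Lean document; each statement's English description precedes it below -/
import Mathlib

section
/- Positive definiteness of the forest-interpolated covariance: let 𝔽 be a forest on a finite set 𝒪 and w ∈ [0,1]^{L(𝔽)}. Define the symmetric matrix Z(w) ∈ ℝ^{𝒪×𝒪} by Z(w)_{o,o} = 1 for every o, and for o ≠ o', Z(w)_{o,o'} = the minimum of the w_ℓ along the unique path in 𝔽 from o to o' if o and o' lie in the same connected component of 𝔽, and Z(w)_{o,o'} = 0 otherwise. Then Z(w) is positive semidefinite; consequently, for every positive semidefinite matrix C ∈ ℝ^{𝒪×𝒪}, the entrywise (Hadamard) product (Z(w)_{o,o'} · C_{o,o'})_{o,o'∈𝒪} is positive semidefinite. -/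
/-!
Write `G_t` for the graph of the forest's edges of weight at least `t`. For `o ≠ o'` joined
in the forest, `o` and `o'` are joined in `G_t` exactly when `t ≤ Z(w)_{o,o'}`, so
`Z(w) = ∫₀¹ R_t dt`, where `R_t` is the reachability matrix of `G_t`. Each `R_t` is a sum of
the rank-one matrices `1_c 1_cᵀ` over the connected components `c` of `G_t`, hence positive
semidefinite, and positive semidefiniteness survives integration. The Hadamard product
statement is then the Schur product theorem.
-/

open Matrix MeasureTheory SimpleGraph

namespace Matrix

theorem posSemidef_ite_apply_eq_apply {n ι R : Type*} [CommRing R] [PartialOrder R] [StarRing R]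
    [StarOrderedRing R] [Finite n] [Finite ι] [DecidableEq ι] (f : n → ι) :
    (of fun i j => if f i = f j then (1 : R) else 0).PosSemidef := by
  have := Fintype.ofFinite ι
  let e : ι → n → R := fun c i => if f i = c then 1 else 0
  have hsum : (of fun i j => if f i = f j then (1 : R) else 0) =
      ∑ c, vecMulVec (e c) (star (e c)) := by
    ext i j
    by_cases h : f i = f j <;> simp [e, vecMulVec_apply, sum_apply, h, eq_comm]
  rw [hsum]
  exact posSemidef_sum _ fun c _ => posSemidef_vecMulVec_self_star (e c)

theorem posSemidef_integral {α n : Type*} [MeasurableSpace α] [Fintype n] {μ : Measure α}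
    {M : α → Matrix n n ℝ} (hint : ∀ i j, Integrable (fun t => M t i j) μ)
    (hM : ∀ᵐ t ∂μ, (M t).PosSemidef) :
    (of fun i j => ∫ t, M t i j ∂μ).PosSemidef := by
  refine .of_dotProduct_mulVec_nonneg ?_ fun x => ?_
  · ext i j
    simp only [conjTranspose_apply, of_apply, star_trivial]
    refine integral_congr_ae (hM.mono fun t ht => ?_)
    exact congrFun (congrFun ht.isHermitian i) j
  · have hint' : ∀ i j, Integrable (fun t => x i * (M t i j * x j)) μ := fun i j =>
      ((hint i j).mul_const _).const_mul _
    have hquad : star x ⬝ᵥ (of fun i j => ∫ t, M t i j ∂μ) *ᵥ x =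
        ∫ t, star x ⬝ᵥ M t *ᵥ x ∂μ := by
      simp only [dotProduct, mulVec, of_apply, star_trivial, Pi.star_apply, Finset.mul_sum]
      rw [integral_finsetSum _ fun i _ => integrable_finsetSum _ fun j _ => hint' i j]
      refine Finset.sum_congr rfl fun i _ => ?_
      rw [integral_finsetSum _ fun j _ => hint' i j]
      simp only [integral_mul_const, integral_const_mul]
    rw [hquad]
    exact integral_nonneg_of_ae (hM.mono fun t ht => ht.dotProduct_mulVec_nonneg x)

end Matrix

namespace SimpleGraph

variable {V : Type*} (G : SimpleGraph V)

open Classical in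
noncomputable def reachabilityMatrix (R : Type*) [Zero R] [One R] : Matrix V V R :=
  of fun u v => if G.Reachable u v then 1 else 0

theorem posSemidef_reachabilityMatrix [Finite V] (R : Type*) [CommRing R] [PartialOrder R]
    [StarRing R] [StarOrderedRing R] : (G.reachabilityMatrix R).PosSemidef := by
  classical
  convert posSemidef_ite_apply_eq_apply (R := R) G.connectedComponentMk using 1
  ext u v
  simp [reachabilityMatrix, ConnectedComponent.eq]

section Superlevel

variable {β : Type*} [LinearOrder β] {w : Sym2 V → β}

theorem antitone_reachabilityMatrix_deleteEdges_lt (R : Type*) [Zero R] [One R] [Preorder R]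
    [ZeroLEOneClass R] (u v : V) :
    Antitone fun t => (G.deleteEdges {e | w e < t}).reachabilityMatrix R u v := by
  intro s t hst
  have hle : G.deleteEdges {e | w e < t} ≤ G.deleteEdges {e | w e < s} :=
    deleteEdges_anti fun e he => lt_of_lt_of_le he hst
  simp only [reachabilityMatrix, of_apply]
  split_ifs with ht hs hs
  exacts [le_rfl, absurd (ht.mono hle) hs, zero_le_one, le_rfl]

variable {G} {u v : V} {m : β}

theorem reachable_deleteEdges_lt_iff
    (hm : ∀ p : G.Walk u v, p.IsPath → IsLeast {x | ∃ e ∈ p.edges, x = w e} m)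
    (huv : G.Reachable u v) (t : β) :
    (G.deleteEdges {e | w e < t}).Reachable u v ↔ t ≤ m := by
  classical
  constructor
  · rintro ⟨q⟩
    let p := (q.mapLe (G.deleteEdges_le _)).toPath
    obtain ⟨e, he, rfl⟩ := (hm p p.2).1
    have heq : e ∈ q.edges := by
      simpa [Walk.edges_mapLe_eq_edges] using Walk.edges_toPath_subset_edges _ he
    have := q.edges_subset_edgeSet heq
    rw [edgeSet_deleteEdges] at this
    exact not_lt.1 this.2
  · intro htm
    obtain ⟨p⟩ := huv
    refine ⟨p.toPath.1.transfer _ fun e he => ?_⟩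
    rw [edgeSet_deleteEdges]
    exact ⟨p.toPath.1.edges_subset_edgeSet he,
      not_lt.2 (htm.trans ((hm _ p.toPath.2).2 ⟨e, he, rfl⟩))⟩

theorem integral_reachabilityMatrix_deleteEdges_lt {w : Sym2 V → ℝ} {m : ℝ}
    (hw : ∀ e ∈ G.edgeSet, w e ∈ Set.Icc 0 1)
    (hm : ∀ p : G.Walk u v, p.IsPath → IsLeast {x | ∃ e ∈ p.edges, x = w e} m)
    (huv : G.Reachable u v) :
    ∫ t in (0 : ℝ)..1, (G.deleteEdges {e | w e < t}).reachabilityMatrix ℝ u v = m := by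
  classical
  have hind : (fun t => (G.deleteEdges {e | w e < t}).reachabilityMatrix ℝ u v) =
      {t | t ≤ m}.indicator 1 := by
    ext t
    simp [reachabilityMatrix, Set.indicator, reachable_deleteEdges_lt_iff hm huv]
  obtain ⟨p⟩ := huv
  obtain ⟨e, he, rfl⟩ := (hm _ p.toPath.2).1
  rw [hind, intervalIntegral.integral_indicator (hw e (p.toPath.1.edges_subset_edgeSet he))]
  simp

end Superlevel

end SimpleGraph

theorem forest_interpolated_covariance_posSemidef_general
    {V : Type} [Fintype V]
    (F : Finset (Sym2 V))
    (w : Sym2 V → ℝ) (hw : ∀ e ∈ F, w e ∈ Set.Icc (0:ℝ) 1)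
    (A : Matrix V V ℝ)
    (hdiag : ∀ o : V, A o o = 1)
    (hmin : ∀ o o' : V, o ≠ o' →
      ∀ p : (SimpleGraph.fromEdgeSet (F : Set (Sym2 V))).Walk o o', p.IsPath →
        IsLeast {x : ℝ | ∃ e ∈ p.edges, x = w e} (A o o'))
    (hzero : ∀ o o' : V, o ≠ o' →
      ¬ (SimpleGraph.fromEdgeSet (F : Set (Sym2 V))).Reachable o o' → A o o' = 0) :
    A.PosSemidef ∧
      ∀ C : Matrix V V ℝ, C.PosSemidef →
        (Matrix.of fun o o' => A o o' * C o o').PosSemidef := by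
  set G := fromEdgeSet (F : Set (Sym2 V))
  let R : ℝ → Matrix V V ℝ := fun t => (G.deleteEdges {e | w e < t}).reachabilityMatrix ℝ
  have hentry (o o' : V) : ∫ t in (0 : ℝ)..1, R t o o' = A o o' := by
    by_cases ho : o = o'
    · subst ho
      simp [R, reachabilityMatrix, hdiag]
    by_cases hr : G.Reachable o o'
    · refine integral_reachabilityMatrix_deleteEdges_lt (fun e he => hw e ?_) (hmin o o' ho) hr
      rw [edgeSet_fromEdgeSet] at he
      exact he.1
    · have hR (t : ℝ) : R t o o' = 0 := by
        simpa [R, reachabilityMatrix] using fun h : Reachable _ o o' =>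
          hr (h.mono (G.deleteEdges_le _))
      simp [hR, hzero o o' ho hr]
  have hA : A = of fun o o' => ∫ t in Set.Ioc (0 : ℝ) 1, R t o o' := by
    ext o o'
    rw [of_apply, ← intervalIntegral.integral_of_le zero_le_one, hentry]
  have hApsd : A.PosSemidef := hA ▸ posSemidef_integral
    (fun o o' => (antitone_reachabilityMatrix_deleteEdges_lt G ℝ o o').intervalIntegrable.1)
    (.of_forall fun t => posSemidef_reachabilityMatrix _ ℝ)
  exact ⟨hApsd, fun C hC => hApsd.hadamard hC⟩

/-- Positive definiteness of the forest-interpolated covariance: let `F` be a forest on a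
finite set, `w ∈ [0,1]^{L(F)}`, and let `A` be the matrix with `A o o = 1`, `A o o' = ` the
minimum of `w` along the unique path in `F` from `o` to `o'` when they are connected, and
`A o o' = 0` otherwise.  Then `A` is positive semidefinite, and the Hadamard product of `A`
with any positive semidefinite matrix `C` is positive semidefinite. -/
theorem forest_interpolated_covariance_posSemidef
    {V : Type} [Fintype V] [DecidableEq V]
    (F : Finset (Sym2 V))
    (hF : (SimpleGraph.fromEdgeSet (F : Set (Sym2 V))).IsAcyclic)
    (w : Sym2 V → ℝ) (hw : ∀ e ∈ F, w e ∈ Set.Icc (0:ℝ) 1)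
    (A : Matrix V V ℝ)
    (hdiag : ∀ o : V, A o o = 1)
    (hmin : ∀ o o' : V, o ≠ o' →
      ∀ p : (SimpleGraph.fromEdgeSet (F : Set (Sym2 V))).Walk o o', p.IsPath →
        IsLeast {x : ℝ | ∃ e ∈ p.edges, x = w e} (A o o'))
    (hzero : ∀ o o' : V, o ≠ o' →
      ¬ (SimpleGraph.fromEdgeSet (F : Set (Sym2 V))).Reachable o o' → A o o' = 0) :
    A.PosSemidef ∧
      ∀ C : Matrix V V ℝ, C.PosSemidef →
        (Matrix.of fun o o' => A o o' * C o o').PosSemidef :=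
  forest_interpolated_covariance_posSemidef_general F w hw A hdiag hmin hzero
end

section
/- Spring factor for secondary fields (covariance form): fix M > 1, β < 1, r ∈ ℕ, j ∈ ℤ, and integers k, k' > j. Let C : ℝ×ℝ → ℝ be twice continuously differentiable and suppose |∂₁∂₂C(v,v')| ≤ K·M^{(2−2β)j}·(1+M^j|v−v'|)^{−r} for all v, v'. For x, y ∈ ℝ let I = Δ^k_x and J = Δ^{k'}_y be the M-adic intervals of scales k and k' containing x and y, and set D(x,y) := C(x,y) − ⨍_I C(u,y) du − ⨍_J C(x,u') du' + ⨍_I ⨍_J C(u,u') du du'. Then there is a constant K' depending only on K, r and M such that |D(x,y)| ≤ K'·M^{−β(k+k')}·M^{−(1−β)(k−j)}·M^{−(1−β)(k'−j)}·(1+M^j|x−y|)^{−r}. (When C is the covariance of a scale-j field ψ^j, D(x,y) is the covariance ⟨δ^kψ^j(x) δ^{k'}ψ^j(y)⟩ of the secondary fields.) -/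
open MeasureTheory intervalIntegral

/-- Left endpoint of the `M`-adic interval of scale `k` containing `x`. -/
noncomputable def madicLo (M : ℝ) (k : ℤ) (x : ℝ) : ℝ :=
  (⌊x * M ^ k⌋ : ℝ) * M ^ (-k)

/-- Average of `g` over the `M`-adic interval of scale `k` containing `x`. -/
noncomputable def madicAvg (M : ℝ) (k : ℤ) (x : ℝ) (g : ℝ → ℝ) : ℝ :=
  M ^ k * ∫ u in (madicLo M k x)..(madicLo M k x + M ^ (-k)), g u

/-!
The double difference is `δ^k_x δ^{k'}_y C`, where `δ^k_x g` is the average of `g x - g u` over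
`u ∈ Δ^k_x`. Hence it is bounded by the rectangle increments
`C(x,y) - C(x,u') - C(u,y) + C(u,u')` with `|u - x| ≤ M^{-k}`, `|u' - y| ≤ M^{-k'}`, and two
applications of the mean value theorem bound these by `M^{-k} M^{-k'}` times the size of `∂₁∂₂C`
on the rectangle. Since `k, k' > j`, the rectangle stays within `M^{-j}` of `(x, y)`, so
`1 + M^j |x - y| ≤ 3 (1 + M^j |s - t|)` there, and `K' = 3^r (K + 1)` works.
-/

open Function Set

section Madic

variable {M : ℝ} {k : ℤ} {x : ℝ}

lemma madicLo_le (hM : 0 < M) (k : ℤ) (x : ℝ) : madicLo M k x ≤ x := by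
  rw [madicLo, zpow_neg, ← div_eq_mul_inv, div_le_iff₀ (zpow_pos hM k)]
  exact Int.floor_le _

lemma lt_madicLo_add (hM : 0 < M) (k : ℤ) (x : ℝ) : x < madicLo M k x + M ^ (-k) := by
  rw [madicLo, ← add_one_mul, zpow_neg, ← div_eq_mul_inv, lt_div_iff₀ (zpow_pos hM k)]
  exact Int.lt_floor_add_one _

lemma madicAvg_const (hM : M ≠ 0) (c : ℝ) : madicAvg M k x (fun _ => c) = c := by
  rw [madicAvg, intervalIntegral.integral_const, smul_eq_mul, add_sub_cancel_left, ← mul_assoc,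
    ← zpow_add₀ hM, add_neg_cancel, zpow_zero, one_mul]

lemma madicAvg_sub {f g : ℝ → ℝ} (hf : Continuous f) (hg : Continuous g) :
    madicAvg M k x (fun u => f u - g u) = madicAvg M k x f - madicAvg M k x g := by
  rw [madicAvg, madicAvg, madicAvg, intervalIntegral.integral_sub (hf.intervalIntegrable _ _)
    (hg.intervalIntegrable _ _), mul_sub]

lemma continuous_madicAvg {C : ℝ → ℝ → ℝ} (hC : Continuous (uncurry C)) (k : ℤ) (y : ℝ) :
    Continuous fun u => madicAvg M k y (C u) :=
  continuous_const.mul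
    (intervalIntegral.continuous_parametric_intervalIntegral_of_continuous' hC _ _)

lemma abs_madicAvg_le (hM : 0 < M) {g : ℝ → ℝ} {B : ℝ}
    (hg : ∀ u, |u - x| ≤ M ^ (-k) → |g u| ≤ B) : |madicAvg M k x g| ≤ B := by
  set a := madicLo M k x
  have hlo : a ≤ x := madicLo_le hM k x
  have hhi : x < a + M ^ (-k) := lt_madicLo_add hM k x
  have hh : 0 < M ^ (-k) := zpow_pos hM _
  have hint : |∫ u in a..a + M ^ (-k), g u| ≤ B * M ^ (-k) := by
    have hbound : ∀ u ∈ uIoc a (a + M ^ (-k)), ‖g u‖ ≤ B := by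
      intro u hu
      rw [uIoc_of_le (by linarith)] at hu
      exact hg u (abs_le.2 ⟨by linarith [hu.1], by linarith [hu.2]⟩)
    simpa only [Real.norm_eq_abs, add_sub_cancel_left, abs_of_pos hh]
      using intervalIntegral.norm_integral_le_of_norm_le_const hbound
  calc |madicAvg M k x g| = M ^ k * |∫ u in a..a + M ^ (-k), g u| := by
        rw [madicAvg, abs_mul, abs_of_pos (zpow_pos hM _)]
    _ ≤ M ^ k * (B * M ^ (-k)) := by gcongr
    _ = B := by rw [mul_comm B, ← mul_assoc, ← zpow_add₀ hM.ne', add_neg_cancel, zpow_zero, one_mul]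

/-- The secondary field `δ^k g (x) = g x - ⨍_{Δ^k_x} g`. -/
noncomputable def madicDev (M : ℝ) (k : ℤ) (x : ℝ) (g : ℝ → ℝ) : ℝ :=
  g x - madicAvg M k x g

lemma madicDev_eq_madicAvg (hM : M ≠ 0) {g : ℝ → ℝ} (hg : Continuous g) :
    madicDev M k x g = madicAvg M k x (fun u => g x - g u) := by
  rw [madicAvg_sub continuous_const hg, madicAvg_const hM, madicDev]

lemma madicDev_sub {f g : ℝ → ℝ} (hf : Continuous f) (hg : Continuous g) :
    madicDev M k x (fun u => f u - g u) = madicDev M k x f - madicDev M k x g := by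
  rw [madicDev, madicDev, madicDev, madicAvg_sub hf hg]
  ring

lemma abs_madicDev_le (hM : 0 < M) {g : ℝ → ℝ} (hg : Continuous g) {B : ℝ}
    (hB : ∀ u, |u - x| ≤ M ^ (-k) → |g x - g u| ≤ B) : |madicDev M k x g| ≤ B := by
  rw [madicDev_eq_madicAvg hM.ne' hg]
  exact abs_madicAvg_le hM hB

end Madic

section MixedPartial

variable {C : ℝ → ℝ → ℝ}

lemma hasDerivAt_left_of_differentiable (hC : Differentiable ℝ (uncurry C)) (s t : ℝ) :
    HasDerivAt (fun s => C s t) (fderiv ℝ (uncurry C) (s, t) (1, 0)) s :=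
  (hC (s, t)).hasFDerivAt.comp_hasDerivAt (l := uncurry C) s
    ((hasDerivAt_id' s).prodMk (hasDerivAt_const s t))

lemma differentiable_deriv_left (hC : ContDiff ℝ 2 (uncurry C)) (s : ℝ) :
    Differentiable ℝ fun t => deriv (fun s => C s t) s := by
  have hD : Differentiable ℝ (fderiv ℝ (uncurry C)) :=
    (hC.fderiv_right (m := 1) (by norm_num)).differentiable one_ne_zero
  simp_rw [(hasDerivAt_left_of_differentiable (hC.differentiable (by norm_num)) s _).deriv]
  fun_prop

lemma abs_sub_sub_add_le_of_abs_deriv_deriv_le (hC : ContDiff ℝ 2 (uncurry C))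
    {x y u v B : ℝ}
    (hB : ∀ s ∈ uIcc x u, ∀ t ∈ uIcc y v, |deriv (fun t => deriv (fun s => C s t) s) t| ≤ B) :
    |C x y - C x v - C u y + C u v| ≤ B * |v - y| * |u - x| := by
  have hdiff : ∀ t, Differentiable ℝ fun s => C s t := fun t s =>
    (hasDerivAt_left_of_differentiable (hC.differentiable (by norm_num)) s t).differentiableAt
  have hφ' : ∀ s ∈ uIcc x u, ‖deriv (fun s => C s v - C s y) s‖ ≤ B * |v - y| := by
    intro s hs
    rw [deriv_fun_sub (hdiff v s) (hdiff y s)]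
    exact (convex_uIcc y v).norm_image_sub_le_of_norm_deriv_le
      (fun t _ => differentiable_deriv_left hC s t) (hB s hs) left_mem_uIcc right_mem_uIcc
  have hφ := (convex_uIcc x u).norm_image_sub_le_of_norm_deriv_le
    (fun s _ => (hdiff v s).sub (hdiff y s)) hφ' left_mem_uIcc right_mem_uIcc
  calc |C x y - C x v - C u y + C u v| = ‖(C u v - C u y) - (C x v - C x y)‖ := by
        rw [Real.norm_eq_abs]; ring_nf
    _ ≤ B * |v - y| * |u - x| := hφ

end MixedPartial

lemma div_one_add_mul_abs_sub_pow_le {a c ρ x y s t : ℝ} (ha : 0 ≤ a) (hc : 0 ≤ c)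
    (hρ : c * ρ ≤ 1) (hs : |s - x| ≤ ρ) (ht : |t - y| ≤ ρ) (r : ℕ) :
    a / (1 + c * |s - t|) ^ r ≤ 3 ^ r * a / (1 + c * |x - y|) ^ r := by
  have htri : |x - y| ≤ |s - x| + |s - t| + |t - y| := by
    linarith [abs_sub_le x s y, abs_sub_le s t y, abs_sub_comm x s]
  have hweight : (1 + c * |x - y|) ^ r ≤ 3 ^ r * (1 + c * |s - t|) ^ r := by
    rw [← mul_pow]
    gcongr
    nlinarith [mul_le_mul_of_nonneg_left htri hc, mul_le_mul_of_nonneg_left hs hc,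
      mul_le_mul_of_nonneg_left ht hc, mul_nonneg hc (abs_nonneg (s - t))]
  calc a / (1 + c * |s - t|) ^ r = 3 ^ r * a / (3 ^ r * (1 + c * |s - t|) ^ r) := by
        rw [mul_div_mul_left _ _ (by positivity)]
    _ ≤ 3 ^ r * a / (1 + c * |x - y|) ^ r := by gcongr

section SecondaryFields

variable {M : ℝ} {k k' : ℤ} {x y : ℝ} {C : ℝ → ℝ → ℝ}

lemma madicDev_madicDev_eq (hC : Continuous (uncurry C)) :
    madicDev M k x (fun u => madicDev M k' y (C u))
      = C x y - madicAvg M k x (fun u => C u y) - madicAvg M k' y (fun u' => C x u')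
        + madicAvg M k x (fun u => madicAvg M k' y (fun u' => C u u')) := by
  simp only [madicDev]
  rw [madicAvg_sub (hC.uncurry_right y) (continuous_madicAvg hC k' y)]
  ring

lemma abs_madicDev_madicDev_le (hM : 0 < M) (hC : ContDiff ℝ 2 (uncurry C)) {B : ℝ}
    (hB : ∀ s t, |s - x| ≤ M ^ (-k) → |t - y| ≤ M ^ (-k') →
      |deriv (fun t => deriv (fun s => C s t) s) t| ≤ B) :
    |madicDev M k x (fun u => madicDev M k' y (C u))| ≤ B * M ^ (-k') * M ^ (-k) := by
  have hCc : Continuous (uncurry C) := hC.continuous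
  have hB0 : 0 ≤ B := (abs_nonneg _).trans <| hB x y
    (by rw [sub_self, abs_zero]; exact (zpow_pos hM _).le)
    (by rw [sub_self, abs_zero]; exact (zpow_pos hM _).le)
  have hFc : Continuous fun u => madicDev M k' y (C u) :=
    (hCc.uncurry_right y).sub (continuous_madicAvg hCc k' y)
  refine abs_madicDev_le hM hFc fun u hu => ?_
  rw [← madicDev_sub (hCc.uncurry_left x) (hCc.uncurry_left u)]
  refine abs_madicDev_le hM ((hCc.uncurry_left x).sub (hCc.uncurry_left u)) fun v hv => ?_
  calc |C x y - C u y - (C x v - C u v)| = |C x y - C x v - C u y + C u v| := by ring_nf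
    _ ≤ B * |v - y| * |u - x| := abs_sub_sub_add_le_of_abs_deriv_deriv_le hC fun s hs t ht =>
        hB s t ((abs_sub_left_of_mem_uIcc hs).trans hu) ((abs_sub_left_of_mem_uIcc ht).trans hv)
    _ ≤ B * M ^ (-k') * M ^ (-k) := by gcongr

end SecondaryFields

/-- Spring factor for secondary fields: if `|∂₁∂₂C(v,v')| ≤ K·M^{(2−2β)j}(1+M^j|v−v'|)^{−r}`,
then the doubly-averaged difference
`D(x,y) = C(x,y) − ⨍_{Δ^k_x} C(u,y) du − ⨍_{Δ^{k'}_y} C(x,u') du' + ⨍⨍ C(u,u')`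
satisfies `|D(x,y)| ≤ K'·M^{−β(k+k')}·M^{−(1−β)(k−j)}·M^{−(1−β)(k'−j)}·(1+M^j|x−y|)^{−r}`
with `K'` depending only on `K, r, M`. -/
theorem secondary_field_spring_factor
    (M : ℝ) (hM : 1 < M) (r : ℕ) (K : ℝ) (hK : 0 ≤ K) :
    ∃ K' : ℝ, 0 < K' ∧
      ∀ (β : ℝ), β < 1 → ∀ (j k k' : ℤ), j < k → j < k' →
      ∀ C : ℝ → ℝ → ℝ, ContDiff ℝ 2 (Function.uncurry C) →
      (∀ v v' : ℝ,
          |deriv (fun u' => deriv (fun u => C u u') v) v'|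
            ≤ K * M ^ ((2 - 2 * β) * (j : ℝ)) / (1 + M ^ j * |v - v'|) ^ r) →
      ∀ x y : ℝ,
        |C x y - madicAvg M k x (fun u => C u y) - madicAvg M k' y (fun u' => C x u')
            + madicAvg M k x (fun u => madicAvg M k' y (fun u' => C u u'))|
          ≤ K' * M ^ (-β * ((k : ℝ) + (k' : ℝ)))
              * M ^ (-(1 - β) * ((k : ℝ) - (j : ℝ)))
              * M ^ (-(1 - β) * ((k' : ℝ) - (j : ℝ))) / (1 + M ^ j * |x - y|) ^ r := by
  have hM0 : 0 < M := zero_lt_one.trans hM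
  refine ⟨3 ^ r * (K + 1), by positivity, ?_⟩
  intro β _ j k k' hjk hjk' C hC hbound x y
  set P := 1 + M ^ j * |x - y|
  set A := M ^ ((2 - 2 * β) * (j : ℝ))
  have hscale : ∀ {m : ℤ}, j < m → M ^ (-m) ≤ M ^ (-j) := fun hm =>
    zpow_le_zpow_right₀ hM.le (neg_le_neg hm.le)
  have hjj : M ^ j * M ^ (-j) ≤ 1 := by rw [← zpow_add₀ hM0.ne', add_neg_cancel, zpow_zero]
  have hmixed : ∀ s t, |s - x| ≤ M ^ (-k) → |t - y| ≤ M ^ (-k') →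
      |deriv (fun t => deriv (fun s => C s t) s) t| ≤ 3 ^ r * (K * A) / P ^ r :=
    fun s t hs ht => (hbound s t).trans <| div_one_add_mul_abs_sub_pow_le (by positivity)
      (zpow_pos hM0 j).le hjj (hs.trans (hscale hjk)) (ht.trans (hscale hjk')) r
  have hexp : A * M ^ (-k') * M ^ (-k) = M ^ (-β * ((k : ℝ) + (k' : ℝ)))
      * M ^ (-(1 - β) * ((k : ℝ) - (j : ℝ))) * M ^ (-(1 - β) * ((k' : ℝ) - (j : ℝ))) := by
    simp only [A, ← Real.rpow_intCast, ← Real.rpow_add hM0]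
    congr 1
    push_cast
    ring
  rw [← madicDev_madicDev_eq hC.continuous]
  calc _ ≤ 3 ^ r * (K * A) / P ^ r * M ^ (-k') * M ^ (-k) := abs_madicDev_madicDev_le hM0 hC hmixed
    _ = 3 ^ r * K * (A * M ^ (-k') * M ^ (-k)) / P ^ r := by ring
    _ ≤ 3 ^ r * (K + 1) * (A * M ^ (-k') * M ^ (-k)) / P ^ r := by gcongr; linarith
    _ = _ := by rw [hexp]; ring
end

section
/- Wick bound with spatial structure: let S be a countable set, I a set equipped with a projection π : I → S whose fibers π^{−1}(s) are finite, and c : I×I → [0,∞) a symmetric kernel. A partial pairing of I of size N is a set F of N pairwise-disjoint unordered pairs of distinct elements of I; its spatial projection is the graph whose vertex set is {π(i) : i occurs in some pair of F} and whose edges are the {π(i),π(i')} for {i,i'} ∈ F; F is called connecting if its spatial projection is a connected graph. Fix s₁ ∈ S and N ≥ 1. Then, the sum being taken in [0,∞], Σ_{F connecting pairing of size N whose spatial projection contains the vertex s₁} ∏_{{i,i'}∈F} c(i,i') ≤ (1 + sup_{s∈S} Σ_{i∈π^{−1}(s)} Σ_{i'∈I, i'≠i} c(i,i'))^{3N}.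 -/
open scoped ENNReal NNReal

/-!
Explore a connecting pairing `F` of size `N` by depth-first search on its spatial graph, starting
from `s₁` and keeping a stack of spatial vertices. Each step either pops the stack or traverses a
still unused pair `{i, j}` with `π i` on top of the stack, pushing `π j`; the search uses `N`
traversals and `N + 1` pops, and the recorded word of length `2N + 1` determines `F` and carries
its weight `∏ c(i, j)`. Summing over all words letter by letter, a pop contributes `1` and the
traversals from the current top vertex `s` contribute at most `Σ_{π i = s} Σ_{j ≠ i} c(i, j)`, so
the total is at most `(1 + sup)^(2N + 1) ≤ (1 + sup)^(3N)`.
-/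

def lengthSuccEquiv (α : Type*) (n : ℕ) :
    {w : List α // w.length = n + 1} ≃ α × {w : List α // w.length = n} where
  toFun
    | ⟨a :: w, h⟩ => (a, ⟨w, Nat.succ.inj h⟩)
  invFun p := ⟨p.1 :: p.2.1, congrArg (· + 1) p.2.2⟩
  left_inv
    | ⟨_ :: _, _⟩ => rfl
  right_inv _ := rfl

theorem ENNReal.tsum_option {β : Type*} (f : Option β → ℝ≥0∞) :
    ∑' o, f o = f none + ∑' b, f (some b) := by
  rw [← (Equiv.optionEquivSumPUnit.{0} β).symm.tsum_eq,
    ENNReal.summable.tsum_sum ENNReal.summable, add_comm]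
  simp

section WeightedWords

variable {σ α : Type*} (next : σ → α → σ) (wt : σ → α → ℝ≥0∞)

noncomputable def pathWeight : σ → List α → ℝ≥0∞
  | _, [] => 1
  | q, a :: w => wt q a * pathWeight (next q a) w

theorem tsum_pathWeight_le {B : ℝ≥0∞} (hB : ∀ q, ∑' a, wt q a ≤ B) :
    ∀ (n : ℕ) (q : σ), ∑' w : {w : List α // w.length = n}, pathWeight next wt q w ≤ B ^ n
  | 0, q => by
    rw [tsum_eq_single (⟨[], rfl⟩ : {w : List α // w.length = 0})
      fun w hw => absurd (Subtype.ext (List.length_eq_zero_iff.mp w.2)) hw]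
    simp [pathWeight]
  | n + 1, q => calc
    ∑' w : {w : List α // w.length = n + 1}, pathWeight next wt q w
        = ∑' a, wt q a * ∑' w : {w : List α // w.length = n}, pathWeight next wt (next q a) w := by
      rw [← (lengthSuccEquiv α n).symm.tsum_eq, ENNReal.tsum_prod']
      simp_rw [← ENNReal.tsum_mul_left]
      rfl
    _ ≤ ∑' a, wt q a * B ^ n := by
      gcongr with a
      exact tsum_pathWeight_le hB n (next q a)
    _ = (∑' a, wt q a) * B ^ n := ENNReal.tsum_mul_right
    _ ≤ B ^ (n + 1) := by
      rw [pow_succ']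
      gcongr
      exact hB q

end WeightedWords

theorem SimpleGraph.Reachable.eq_of_forall_not_adj {V : Type*} {G : SimpleGraph V} {v t : V}
    (h : G.Reachable v t) (ht : ∀ u, ¬ G.Adj t u) : v = t := by
  obtain ⟨p⟩ := h.symm
  cases p with
  | nil => rfl
  | cons hadj _ => exact absurd hadj (ht _)

theorem SimpleGraph.Reachable.of_sup_edge {V : Type*} {G : SimpleGraph V} {a b v t : V}
    (h : (G ⊔ SimpleGraph.edge a b).Reachable v t) :
    G.Reachable v t ∨ G.Reachable v a ∨ G.Reachable v b := by
  obtain ⟨p⟩ := h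
  induction p with
  | nil => exact Or.inl .rfl
  | cons hadj _ ih =>
    rcases hadj with hG | hab
    · exact ih.imp (hG.reachable.trans ·) (Or.imp (hG.reachable.trans ·) (hG.reachable.trans ·))
    · rw [SimpleGraph.edge_adj] at hab
      rcases hab.1 with ⟨rfl, rfl⟩ | ⟨rfl, rfl⟩
      · exact Or.inr (Or.inl .rfl)
      · exact Or.inr (Or.inr .rfl)

section SpatialDFS

variable {S I : Type*} (π : I → S)

def spatialGraph (F : Set (Sym2 I)) : SimpleGraph S :=
  SimpleGraph.fromEdgeSet (Sym2.map π '' F)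

theorem spatialGraph_insert_le (F : Set (Sym2 I)) (i j : I) :
    spatialGraph π (insert s(i, j) F) ≤ spatialGraph π F ⊔ SimpleGraph.edge (π i) (π j) := by
  rw [spatialGraph, spatialGraph, SimpleGraph.edge, ← SimpleGraph.fromEdgeSet_union,
    Set.image_insert_eq, Sym2.map_mk, Set.insert_eq, Set.union_comm]

theorem not_spatialGraph_adj {F : Set (Sym2 I)} {s t : S} (hs : ∀ e ∈ F, ∀ i ∈ e, π i ≠ s) :
    ¬ (spatialGraph π F).Adj s t := by
  rintro ⟨⟨e, he, hes⟩, -⟩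
  obtain ⟨i, hi, rfl⟩ := Sym2.mem_map.mp (hes ▸ Sym2.mem_mk_left s t)
  exact hs e he i hi rfl

/- The letters of a depth-first search acting on a stack of spatial vertices: `none` pops the
stack, `some (i, j)` traverses the pair `{i, j}` from the top vertex `π i` and pushes `π j`. -/

def dfsNext : List S → Option (I × I) → List S
  | L, none => L.tail
  | L, some (_, j) => π j :: L

noncomputable def dfsWeight [DecidableEq S] [DecidableEq I] (wt : Sym2 I → ℝ≥0∞) :
    List S → Option (I × I) → ℝ≥0∞
  | _, none => 1
  | [], some _ => 0
  | s :: _, some (i, j) => if π i = s ∧ j ≠ i then wt s(i, j) else 0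

def pushedPairs (word : List (Option (I × I))) : Multiset (Sym2 I) :=
  (word.reduceOption.map fun p => s(p.1, p.2) : List (Sym2 I))

theorem tsum_dfsWeight_le [DecidableEq S] [DecidableEq I] (wt : Sym2 I → ℝ≥0∞) (L : List S) :
    ∑' a, dfsWeight π wt L a
      ≤ 1 + ⨆ s, ∑' (i : ↥(π ⁻¹' {s})) (j : {j : I // j ≠ i}), wt s(i, j) := by
  rw [ENNReal.tsum_option]
  refine add_le_add le_rfl ?_
  cases L with
  | nil => simp [dfsWeight]
  | cons s L =>
    refine (le_of_eq ?_).trans (le_iSup _ s)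
    rw [ENNReal.tsum_prod', tsum_subtype (π ⁻¹' {s}) fun i => ∑' j : {j : I // j ≠ i}, wt s(i, j)]
    refine tsum_congr fun i => ?_
    by_cases hi : π i = s
    · subst hi
      rw [Set.indicator_of_mem (s := π ⁻¹' {π i}) rfl]
      refine Eq.trans ?_ (tsum_subtype {j | j ≠ i} fun j => wt s(i, j)).symm
      simp [dfsWeight, Set.indicator_apply]
    · simp [dfsWeight, hi]

theorem exists_dfs_word [DecidableEq S] [DecidableEq I] (wt : Sym2 I → ℝ≥0∞)
    (F : Finset (Sym2 I)) (L : List S) (hF : ∀ e ∈ F, ¬ e.IsDiag)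
    (hL : ∀ e ∈ F, ∀ i ∈ e, ∃ t ∈ L, (spatialGraph π F).Reachable (π i) t) :
    ∃ word : List (Option (I × I)), word.length = 2 * F.card + L.length ∧
      pathWeight (dfsNext π) (dfsWeight π wt) L word = ∏ e ∈ F, wt e ∧
      pushedPairs word = F.val := by
  match L with
  | [] =>
    obtain rfl : F = ∅ := Finset.eq_empty_of_forall_notMem fun e he => by
      induction e using Sym2.ind with
      | _ i j => simpa using hL _ he i (Sym2.mem_mk_left i j)
    exact ⟨[], rfl, rfl, rfl⟩
  | s :: L' =>
    by_cases hs : ∃ e ∈ F, ∃ i ∈ e, π i = s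
    · obtain ⟨e, he, i, hi, rfl⟩ := hs
      obtain ⟨j, rfl⟩ := Sym2.mem_iff_exists.mp hi
      have hji : j ≠ i := fun h => hF _ he (by simp [h])
      set F' := F.erase s(i, j)
      have hle : spatialGraph π F ≤ spatialGraph π F' ⊔ SimpleGraph.edge (π i) (π j) := by
        simpa [F', Set.insert_eq_of_mem he] using spatialGraph_insert_le π (F' : Set (Sym2 I)) i j
      -- removing the pair `{i, j}` only cuts paths at `π i` or `π j`, both now on the stack
      have hL' : ∀ e ∈ F', ∀ k ∈ e, ∃ t ∈ π j :: π i :: L',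
          (spatialGraph π F').Reachable (π k) t := by
        intro e he' k hk
        obtain ⟨t, ht, hr⟩ := hL e (F.mem_of_mem_erase he') k hk
        rcases (hr.mono hle).of_sup_edge with h | h | h
        · exact ⟨t, List.mem_cons_of_mem _ ht, h⟩
        · exact ⟨π i, by simp, h⟩
        · exact ⟨π j, by simp, h⟩
      obtain ⟨word, hlen, hwt, hpairs⟩ := exists_dfs_word wt F' (π j :: π i :: L')
        (fun e he => hF e (F.mem_of_mem_erase he)) hL'
      refine ⟨some (i, j) :: word, ?_, ?_, ?_⟩
      · have : F'.card + 1 = F.card := Finset.card_erase_add_one he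
        simp only [List.length_cons] at hlen ⊢
        omega
      · simpa [pathWeight, dfsWeight, dfsNext, hji, hwt] using Finset.mul_prod_erase F wt he
      · simp only [pushedPairs] at hpairs ⊢
        rw [List.reduceOption_cons_of_some, List.map_cons, ← Multiset.cons_coe, hpairs,
          Finset.erase_val, Multiset.cons_erase he]
    · have hL' : ∀ e ∈ F, ∀ k ∈ e, ∃ t ∈ L', (spatialGraph π F).Reachable (π k) t := by
        intro e he k hk
        obtain ⟨t, ht, hr⟩ := hL e he k hk
        rcases List.mem_cons.mp ht with rfl | ht
        -- `t` is isolated in the spatial graph, so only vertices equal to `t` reach it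
        · refine absurd ⟨e, he, k, hk, hr.eq_of_forall_not_adj fun u => ?_⟩ hs
          exact not_spatialGraph_adj π fun e he i hi hit => hs ⟨e, he, i, hi, hit⟩
        · exact ⟨t, ht, hr⟩
      obtain ⟨word, hlen, hwt, hpairs⟩ := exists_dfs_word wt F L' hF hL'
      exact ⟨none :: word, by simp [hlen]; omega, (one_mul _).trans hwt, hpairs⟩
termination_by 2 * F.card + L.length
decreasing_by
  all_goals simp only [List.length_cons]
  · have := Finset.card_erase_add_one he
    omega
  · omega

theorem tsum_prod_le_of_forall_reachable (wt : Sym2 I → ℝ≥0∞) (s₁ : S) (N : ℕ)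
    {P : Finset (Sym2 I) → Prop}
    (hP : ∀ F, P F → (∀ e ∈ F, ¬ e.IsDiag) ∧ F.card = N ∧
      ∀ e ∈ F, ∀ i ∈ e, (spatialGraph π F).Reachable (π i) s₁) :
    ∑' F : {F // P F}, ∏ e ∈ F.1, wt e
      ≤ (1 + ⨆ s, ∑' (i : ↥(π ⁻¹' {s})) (j : {j : I // j ≠ i}), wt s(i, j)) ^ (2 * N + 1) := by
  classical
  have hword (F : {F // P F}) : ∃ word : {w : List (Option (I × I)) // w.length = 2 * N + 1},
      pathWeight (dfsNext π) (dfsWeight π wt) [s₁] word = ∏ e ∈ F.1, wt e ∧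
        pushedPairs word = F.1.val := by
    obtain ⟨hdiag, hcard, hs₁⟩ := hP F.1 F.2
    obtain ⟨word, hlen, hwt, hpairs⟩ := exists_dfs_word π wt F.1 [s₁] hdiag
      fun e he i hi => ⟨s₁, List.mem_singleton_self _, hs₁ e he i hi⟩
    exact ⟨⟨word, hcard ▸ hlen⟩, hwt, hpairs⟩
  choose Φ hΦwt hΦpairs using hword
  have hΦ : Function.Injective Φ := fun F F' h =>
    Subtype.ext (Finset.val_injective ((hΦpairs F).symm.trans (h ▸ hΦpairs F')))
  calc ∑' F : {F // P F}, ∏ e ∈ F.1, wt e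
      = ∑' F, pathWeight (dfsNext π) (dfsWeight π wt) [s₁] (Φ F) :=
        tsum_congr fun F => (hΦwt F).symm
    _ ≤ ∑' word : {w : List (Option (I × I)) // w.length = 2 * N + 1},
          pathWeight (dfsNext π) (dfsWeight π wt) [s₁] word :=
        ENNReal.tsum_comp_le_tsum_of_injective hΦ _
    _ ≤ _ := tsum_pathWeight_le _ _ (tsum_dfsWeight_le π wt) _ _

end SpatialDFS

/-- Wick bound with spatial structure: `S` countable, `π : I → S` with finite fibers,
`c : I×I → [0,∞)` a symmetric kernel.  The sum (in `[0,∞]`), over all partial pairings `F`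
of `I` of size `N` whose spatial projection is connected and contains the vertex `s₁`, of
the products `∏_{{i,i'}∈F} c(i,i')`, is at most
`(1 + sup_s Σ_{i∈π⁻¹(s)} Σ_{i'≠i} c(i,i'))^{3N}`. -/
theorem wick_bound_spatial_structure
    {S I : Type}
    (π : I → S)
    (c : I → I → ℝ≥0) (hc : ∀ i i', c i i' = c i' i)
    (s₁ : S) (N : ℕ) (hN : 1 ≤ N) :
    ∑' F : {F : Finset (Sym2 I) //
        (∀ e ∈ F, ¬ e.IsDiag) ∧
        (∀ e ∈ F, ∀ e' ∈ F, e ≠ e' → ∀ i : I, i ∈ e → i ∉ e') ∧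
        F.card = N ∧
        (∃ e ∈ F, ∃ i ∈ e, π i = s₁) ∧
        (∀ s s' : S, (∃ e ∈ F, ∃ i ∈ e, π i = s) → (∃ e ∈ F, ∃ i ∈ e, π i = s') →
          (SimpleGraph.fromEdgeSet (Sym2.map π '' (F : Set (Sym2 I)))).Reachable s s')},
      ∏ e ∈ F.1,
        Sym2.lift ⟨fun i i' => ((c i i' : ℝ≥0) : ℝ≥0∞),
          fun i i' => by simp [hc i i']⟩ e
    ≤ (1 + ⨆ s : S, ∑' (i : ↥(π ⁻¹' {s})) (i' : {i' : I // i' ≠ (i : I)}),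
        ((c (i : I) (i' : I) : ℝ≥0) : ℝ≥0∞)) ^ (3 * N) := by
  refine (tsum_prod_le_of_forall_reachable π _ s₁ N fun F ⟨hdiag, _, hcard, hs₁, hconn⟩ =>
    ⟨hdiag, hcard, fun e he i hi => hconn _ _ ⟨e, he, i, hi, rfl⟩ hs₁⟩).trans ?_
  exact pow_le_pow_right₀ le_self_add (by omega)
end
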